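/- Locality of action transformers (framing): for any action α and resources σ, σ₁, σ₂ with σ ∈ (σ₁ ∥ σ₂), if ⟦α⟧σ = σ' (a successful transformation) then either ⟦α⟧σ₁ = ⊤, or there exists σ₁' with ⟦α⟧σ₁ = σ₁' and σ' ∈ (σ₁' ∥ σ₂). -/
import Mathlib

inductive Own | pub | pri
deriving DecidableEq

abbrev Chan := ℕ
abbrev Resource := Chan → Option Own

def Resource.dom (σ : Resource) : Set Chan := {c | (σ c).isSome}

def upd (σ : Resource) (c : Chan) (o : Own) : Resource :=
  fun d => if d = c then some o else σ d

/-- σ ∈ (σ₁ ∥ σ₂): parallel separation. -/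
def PSep (σ σ₁ σ₂ : Resource) : Prop :=
  σ.dom = σ₁.dom ∪ σ₂.dom ∧
  (∀ c, σ₁ c = some Own.pri → σ c = some Own.pri ∧ c ∉ σ₂.dom) ∧
  (∀ c, σ₂ c = some Own.pri → σ c = some Own.pri ∧ c ∉ σ₁.dom)

/-- public lifting σ̂ -/
def pubLift (σ : Resource) : Resource := fun c => (σ c).map fun _ => Own.pub

inductive Act
  | send (c d : Chan)
  | recv (c d : Chan)
  | alloc (c : Chan)
  | tau
  | fault
deriving DecidableEq

inductive ARes | ok (σ : Resource) | top | bot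

def act : Act → Resource → ARes
  | .send c d, σ =>
      if (σ c).isSome ∧ (σ d).isSome then
        if σ c = some Own.pub then .ok (upd σ d Own.pub) else .bot
      else .top
  | .recv c d, σ =>
      if (σ c).isSome then
        if σ c = some Own.pub ∧ σ d ≠ some Own.pri then .ok (upd σ d Own.pub) else .bot
      else .top
  | .alloc c, σ => if (σ c).isSome then .bot else .ok (upd σ c Own.pri)
  | .tau, σ => .ok σ
  | .fault, _ => .top

def dual : Act → Option Act
  | .send c d => some (.recv c d)
  | .recv c d => some (.send c d)
  | _ => none

lemma upd_dom (σ : Resource) (c : Chan) (o : Own) :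
    (upd σ c o).dom = insert c σ.dom := by
  ext x
  simp [Resource.dom, upd]
  by_cases h : x = c <;> simp [h]

lemma mem_dom {σ : Resource} {c : Chan} : c ∈ σ.dom ↔ (σ c).isSome := Iff.rfl

lemma not_pri_of_pub {σ σ₁ σ₂ : Resource} (hsep : PSep σ σ₁ σ₂) {c : Chan}
    (h : σ c = some Own.pub) : σ₁ c ≠ some Own.pri := by
  intro hc
  have := (hsep.2.1 c hc).1
  rw [h] at this; exact Own.noConfusion (Option.some.injEq _ _ ▸ this)

theorem locality_frame (α : Act) (σ σ₁ σ₂ σ' : Resource)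
    (hsep : PSep σ σ₁ σ₂) (h : act α σ = ARes.ok σ') :
    act α σ₁ = ARes.top ∨ ∃ σ₁', act α σ₁ = ARes.ok σ₁' ∧ PSep σ' σ₁' σ₂ := by
  obtain ⟨hdom, h1, h2⟩ := hsep
  cases α with
  | send c d =>
    simp only [act] at h
    split at h
    case isFalse => exact absurd h (by simp)
    case isTrue hcd =>
      split at h
      case isFalse => exact absurd h (by simp)
      case isTrue hpub =>
        obtain ⟨hc, hd⟩ := hcd
        injection h with h; subst h
        by_cases h1c : (σ₁ c).isSome ∧ (σ₁ d).isSome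
        · right
          have hc1 : σ₁ c = some Own.pub := by
            rcases Option.isSome_iff_exists.1 h1c.1 with ⟨o, ho⟩
            cases o with
            | pub => exact ho
            | pri => exact absurd ho (not_pri_of_pub ⟨hdom, h1, h2⟩ hpub)
          refine ⟨upd σ₁ d Own.pub, ?_, ?_, ?_, ?_⟩
          · simp [act, h1c, hc1]
          · rw [upd_dom, upd_dom, hdom, Set.insert_union]
          · intro x hx
            have hxd : x ≠ d := by rintro rfl; simp [upd] at hx
            simp only [upd, if_neg hxd] at hx
            obtain ⟨ha, hb⟩ := h1 x hx
            exact ⟨by simp only [upd, if_neg hxd]; exact ha, hb⟩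
          · intro x hx
            obtain ⟨ha, hb⟩ := h2 x hx
            have hxd : x ≠ d := by
              rintro rfl
              exact absurd h1c.2 (hb ·)
            constructor
            · rw [upd]; simp [hxd]; exact ha
            · rw [upd_dom]; simp [hxd]; exact hb
        · left
          simp [act, h1c]
  | recv c d =>
    simp only [act] at h
    split at h
    case isFalse => exact absurd h (by simp)
    case isTrue hc =>
      split at h
      case isFalse => exact absurd h (by simp)
      case isTrue hcond =>
        obtain ⟨hpub, hdpri⟩ := hcond
        injection h with h; subst h
        by_cases h1c : (σ₁ c).isSome
        · right
          have hc1 : σ₁ c = some Own.pub := by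
            rcases Option.isSome_iff_exists.1 h1c with ⟨o, ho⟩
            cases o with
            | pub => exact ho
            | pri => exact absurd ho (not_pri_of_pub ⟨hdom, h1, h2⟩ hpub)
          have hd1 : σ₁ d ≠ some Own.pri := fun hp => hdpri (h1 d hp).1
          refine ⟨upd σ₁ d Own.pub, ?_, ?_, ?_, ?_⟩
          · simp [act, h1c, hc1, hd1]
          · rw [upd_dom, upd_dom, hdom, Set.insert_union]
          · intro x hx
            have hxd : x ≠ d := by rintro rfl; simp [upd] at hx
            simp only [upd, if_neg hxd] at hx
            obtain ⟨ha, hb⟩ := h1 x hx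
            exact ⟨by simp only [upd, if_neg hxd]; exact ha, hb⟩
          · intro x hx
            obtain ⟨ha, hb⟩ := h2 x hx
            have hxd : x ≠ d := by rintro rfl; exact hdpri ha
            constructor
            · rw [upd]; simp [hxd]; exact ha
            · rw [upd_dom]; simp [hxd]; exact hb
        · left
          simp [act, h1c]
  | alloc c =>
    simp only [act] at h
    split at h
    case isTrue => exact absurd h (by simp)
    case isFalse hc =>
      injection h with h; subst h
      right
      have h1c : ¬ (σ₁ c).isSome := by
        intro hs
        exact hc (by rw [mem_dom.symm, hdom]; exact Or.inl hs)
      have h2c : ¬ (σ₂ c).isSome := by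
        intro hs
        exact hc (by rw [mem_dom.symm, hdom]; exact Or.inr hs)
      refine ⟨upd σ₁ c Own.pri, by simp [act, h1c], ?_, ?_, ?_⟩
      · rw [upd_dom, upd_dom, hdom, Set.insert_union]
      · intro x hx
        by_cases hxc : x = c
        · subst hxc; exact ⟨by simp [upd], h2c⟩
        · simp only [upd, if_neg hxc] at hx
          obtain ⟨ha, hb⟩ := h1 x hx
          exact ⟨by simp only [upd, if_neg hxc]; exact ha, hb⟩
      · intro x hx
        obtain ⟨ha, hb⟩ := h2 x hx
        have hxc : x ≠ c := by rintro rfl; exact h2c (Option.isSome_iff_exists.2 ⟨_, hx⟩)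
        constructor
        · rw [upd]; simp [hxc]; exact ha
        · rw [upd_dom]; simp [hxc]; exact hb
  | tau =>
    simp only [act] at h
    injection h with h; subst h
    exact Or.inr ⟨σ₁, rfl, hdom, h1, h2⟩
  | fault => exact absurd h (by simp [act])
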